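/- arXiv:2207.05237 — 2 statements merged into one kernel-verified Lean document; each statement's English description precedes it below -/
import Mathlib

section
/- Suppose additionally that e' is an integer with 0 ≤ r_i ≤ e' and 0 ≤ s_i ≤ e' for all i, and let C¹_BT := { (h_i) ∈ C¹ : u^{max(0, r_i + s_i − e')} divides h_i for every i } (the representatives of extension classes of height at most one). Then the image of C¹_BT in coker ∂ is a finite-dimensional F-vector space of dimension dim_F ker ∂ + Σ_{i=0}^{f−1} #{ j ∈ ℤ : max(0, r_i + s_i − e') ≤ j < r_i and j ≡ r_i + c_i − d_i (mod N) }. -/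
noncomputable section

open PowerSeries

/-- Tuples of power series whose nonzero coefficients occur only in degrees lying in the
prescribed congruence classes `e i` modulo `N`. -/
def goodTuples (F : Type*) [Field F] (f N : ℕ) (e : ZMod f → ZMod N) :
    Submodule F (ZMod f → PowerSeries F) where
  carrier := { μ | ∀ i n, (PowerSeries.coeff n) (μ i) ≠ 0 → (n : ZMod N) = e i }
  zero_mem' := by intro i n hn; simp at hn
  add_mem' := by
    intro x y hx hy i n hn
    by_cases h1 : (PowerSeries.coeff n) (x i) = 0
    · refine hy i n fun h2 => hn ?_
      simp [Pi.add_apply, map_add, h1, h2]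
    · exact hx i n h1
  smul_mem' := by
    intro t x hx i n hn
    refine hx i n fun h0 => hn ?_
    simp [Pi.smul_apply, map_smul, h0]

/-- The substitution `u ↦ u^p` on power series. -/
def expandPS (F : Type*) [Field F] (p : ℕ) (μ : PowerSeries F) : PowerSeries F :=
  PowerSeries.mk fun n => if p ∣ n then (PowerSeries.coeff (n / p)) μ else 0

theorem coeff_expandPS (F : Type*) [Field F] (p n : ℕ) (μ : PowerSeries F) :
    (PowerSeries.coeff n) (expandPS F p μ) =
      if p ∣ n then (PowerSeries.coeff (n / p)) μ else 0 :=
  PowerSeries.coeff_mk _ _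

theorem expandPS_add (F : Type*) [Field F] (p : ℕ) (μ ν : PowerSeries F) :
    expandPS F p (μ + ν) = expandPS F p μ + expandPS F p ν := by
  ext n
  simp only [map_add, coeff_expandPS]
  split <;> simp

theorem expandPS_smul (F : Type*) [Field F] (p : ℕ) (t : F) (μ : PowerSeries F) :
    expandPS F p (t • μ) = t • expandPS F p μ := by
  ext n
  simp only [map_smul, coeff_expandPS]
  split <;> simp

/-- The map `∂` of the explicit complex computing homomorphisms and extensions of rank one
Breuil–Kisin modules with tame descent data:
`∂((μ_j))_i = -a_i u^{r_i} μ_i + b_i u^{s_i} μ_{i-1}(u^p)`. -/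
def delMap (F : Type*) [Field F] (p f : ℕ) (a b : ZMod f → F) (r s : ZMod f → ℕ) :
    (ZMod f → PowerSeries F) →ₗ[F] (ZMod f → PowerSeries F) where
  toFun μ := fun i => -(PowerSeries.C (a i) * PowerSeries.X ^ r i * μ i)
      + PowerSeries.C (b i) * PowerSeries.X ^ s i * expandPS F p (μ (i - 1))
  map_add' := by
    intro x y
    funext i
    simp only [Pi.add_apply, expandPS_add, mul_add]
    ring
  map_smul' := by
    intro t x
    funext i
    simp only [Pi.smul_apply, RingHom.id_apply]
    rw [expandPS_smul]
    simp only [PowerSeries.smul_eq_C_mul]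
    ring

end

/-- Tuples of power series whose `i`-th entry is divisible by `X ^ m i`. -/
noncomputable def dvdTuples (F : Type*) [Field F] (f : ℕ) (m : ZMod f → ℕ) :
    Submodule F (ZMod f → PowerSeries F) where
  carrier := { h | ∀ i, (PowerSeries.X : PowerSeries F) ^ m i ∣ h i }
  zero_mem' := fun i => dvd_zero _
  add_mem' := fun hx hy i => dvd_add (hx i) (hy i)
  smul_mem' := by
    intro t x hx i
    rw [Pi.smul_apply, PowerSeries.smul_eq_C_mul]
    exact Dvd.dvd.mul_left (hx i) _

/-! On the tuples of `C⁰` supported in degrees `≥ T := e' + 1` the map `∂` is a bijection onto the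
tuples of `C¹` supported in degrees `≥ T + r_i`: the coefficient of `u^{r_i + n}` in `(∂μ)_i` is
`-a_i μ_{i,n}` plus a multiple of a coefficient `μ_{i-1,k}` with `k < n`, since `p ≥ 2` and
`r_i < T`, so `∂μ = h` can be solved degree by degree. Truncating below these degrees therefore
replaces `C¹_BT` by the finite window of degrees `[r_i + s_i - e', T + r_i)` and `C⁰` by the window
`[0, T)`, and rank–nullity for the truncated map between the windows gives the formula: its kernel
is `ker ∂`, and the part `[r_i, T + r_i)` of the first window has as many admissible degrees as
the second window. -/

open Submodule LinearMap Module

section DimensionCount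

variable {K V W : Type*} [Field K] [AddCommGroup V] [Module K V] [AddCommGroup W] [Module K W]

theorem finrank_map_mkQ_add_finrank_inf {C B L E : Submodule K W} [FiniteDimensional K L]
    (hLC : L ≤ C) (hLB : L ≤ B) (hB : C ⊓ B ≤ L ⊔ E) :
    FiniteDimensional K (map (comap C.subtype E).mkQ (comap C.subtype B)) ∧
    finrank K (map (comap C.subtype E).mkQ (comap C.subtype B)) + finrank K ↥(L ⊓ E) =
      finrank K L := by
  set Ψ := (comap C.subtype E).mkQ ∘ₗ inclusion hLC
  have hrange : range Ψ = map (comap C.subtype E).mkQ (comap C.subtype B) := by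
    rw [range_comp, range_inclusion]
    refine le_antisymm (map_mono fun x hx => hLB hx) ?_
    rintro _ ⟨x, hx, rfl⟩
    obtain ⟨l, hl, e, he, hle⟩ := mem_sup.mp (hB ⟨x.2, hx⟩)
    refine ⟨⟨l, hLC hl⟩, hl, ?_⟩
    rw [← sub_eq_zero, ← map_sub, mkQ_apply, Quotient.mk_eq_zero, mem_comap]
    have : l - (x : W) = -e := by rw [← hle]; abel
    simpa [this] using E.neg_mem he
  have hker : ker Ψ = comap L.subtype E := by
    ext x
    simp [Ψ, Quotient.mk_eq_zero]
  rw [← hrange]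
  refine ⟨inferInstance, ?_⟩
  rw [← finrank_range_add_finrank_ker Ψ, hker, ← finrank_map_subtype_eq, map_comap_subtype]

theorem map_inf_map_eq_map_map {D : V →ₗ[K] W} {Q : W →ₗ[K] W} {C0 : Submodule K V}
    {C B : Submodule K W} (hQ : ∀ y, Q (Q y) = Q y) (hQC : ∀ y ∈ C, Q y ∈ C)
    (hDC0 : map D C0 ≤ C ⊓ B) (hsurj : ∀ y ∈ C, Q y = 0 → y ∈ map D C0) :
    map Q (C ⊓ B) ⊓ map D C0 = map Q (map D C0) := by
  apply le_antisymm
  · rintro _ ⟨⟨y, -, rfl⟩, hy⟩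
    exact ⟨Q y, hy, hQ y⟩
  · rintro _ ⟨y, hy, rfl⟩
    have hyC := (hDC0 hy).1
    have hhigh : y - Q y ∈ map D C0 :=
      hsurj _ (C.sub_mem hyC (hQC y hyC)) (by rw [map_sub, hQ, sub_self])
    refine ⟨⟨y, hDC0 hy, rfl⟩, ?_⟩
    simpa using (map D C0).sub_mem hy hhigh

theorem finrank_map_map_add_finrank_inf_ker {D : V →ₗ[K] W} {P : V →ₗ[K] V} {Q : W →ₗ[K] W}
    {C0 : Submodule K V} {C : Submodule K W} [FiniteDimensional K (map P C0)]
    (hP : ∀ x, P (P x) = P x) (hPC0 : ∀ x ∈ C0, P x ∈ C0)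
    (hDC0 : map D C0 ≤ C) (hDP : ∀ x, P x = 0 → Q (D x) = 0)
    (hinj : ∀ x ∈ C0, P x = 0 → D x = 0 → x = 0)
    (hsurj : ∀ y ∈ C, Q y = 0 → ∃ x ∈ C0, P x = 0 ∧ D x = y) :
    finrank K (map Q (map D C0)) + finrank K ↥(C0 ⊓ ker D) = finrank K (map P C0) := by
  have hQDP : ∀ x, Q (D (P x)) = Q (D x) := fun x => by
    have := hDP (x - P x) (by rw [map_sub, hP, sub_self])
    rwa [map_sub, map_sub, sub_eq_zero, eq_comm] at this
  set ρ := (Q ∘ₗ D) ∘ₗ (map P C0).subtype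
  have hrange : range ρ = map Q (map D C0) := by
    rw [range_comp, range_subtype, ← map_comp, ← map_comp]
    congr 1
    ext x
    exact hQDP x
  set θ := (P ∘ₗ (C0 ⊓ ker D).subtype).codRestrict (map P C0) fun κ => mem_map_of_mem κ.2.1
  have hθ : Function.Injective θ := by
    rw [← ker_eq_bot, ker_eq_bot']
    rintro ⟨κ, hκC0, hκD⟩ hκ
    exact Subtype.ext (hinj κ hκC0 (congrArg Subtype.val hκ) hκD)
  have hθρ : range θ = ker ρ := by
    apply le_antisymm
    · rintro _ ⟨⟨κ, hκC0, hκD⟩, rfl⟩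
      simp [ρ, θ, hQDP, mem_ker.mp hκD]
    · rintro ⟨_, x, hx, rfl⟩ hρ
      obtain ⟨ν, hνC0, hPν, hDν⟩ := hsurj (D (P x)) (hDC0 (mem_map_of_mem (hPC0 x hx))) hρ
      refine ⟨⟨P x - ν, C0.sub_mem (hPC0 x hx) hνC0, by simp [hDν]⟩, ?_⟩
      ext
      simp [θ, hP, hPν]
  rw [← hrange, (LinearEquiv.ofInjective θ hθ).finrank_eq, hθρ, finrank_range_add_finrank_ker]

theorem finrank_map_mkQ_add_finrank_map {D : V →ₗ[K] W} {P : V →ₗ[K] V} {Q : W →ₗ[K] W}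
    {C0 : Submodule K V} {C B : Submodule K W}
    [FiniteDimensional K (map P C0)] [FiniteDimensional K (map Q (C ⊓ B))]
    (hP : ∀ x, P (P x) = P x) (hQ : ∀ y, Q (Q y) = Q y)
    (hPC0 : ∀ x ∈ C0, P x ∈ C0) (hQC : ∀ y ∈ C, Q y ∈ C) (hQB : ∀ y ∈ B, Q y ∈ B)
    (hDC0 : map D C0 ≤ C ⊓ B) (hDP : ∀ x, P x = 0 → Q (D x) = 0)
    (hinj : ∀ x ∈ C0, P x = 0 → D x = 0 → x = 0)
    (hsurj : ∀ y ∈ C, Q y = 0 → ∃ x ∈ C0, P x = 0 ∧ D x = y) :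
    FiniteDimensional K (map (comap C.subtype (map D C0)).mkQ (comap C.subtype B)) ∧
    finrank K (map (comap C.subtype (map D C0)).mkQ (comap C.subtype B)) +
        finrank K (map P C0) =
      finrank K (map Q (C ⊓ B)) + finrank K ↥(C0 ⊓ ker D) := by
  have hsurj' : ∀ y ∈ C, Q y = 0 → y ∈ map D C0 := fun y hy hQy => by
    obtain ⟨x, hx, -, rfl⟩ := hsurj y hy hQy
    exact mem_map_of_mem hx
  have hQCB : map Q (C ⊓ B) ≤ C ⊓ B := by
    rintro _ ⟨y, hy, rfl⟩
    exact ⟨hQC y hy.1, hQB y hy.2⟩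
  have hCB : C ⊓ B ≤ map Q (C ⊓ B) ⊔ map D C0 := fun y hy =>
    mem_sup.mpr ⟨Q y, mem_map_of_mem hy, y - Q y,
      hsurj' _ (C.sub_mem hy.1 (hQC y hy.1)) (by rw [map_sub, hQ, sub_self]), by abel⟩
  obtain ⟨hfin, himg⟩ :=
    finrank_map_mkQ_add_finrank_inf (le_inf_iff.mp hQCB).1 (le_inf_iff.mp hQCB).2 hCB
  have hker := finrank_map_map_add_finrank_inf_ker hP hPC0 (hDC0.trans inf_le_left) hDP hinj hsurj
  rw [map_inf_map_eq_map_map hQ hQC hDC0 hsurj'] at himg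
  exact ⟨hfin, by omega⟩

end DimensionCount

section Counting

open Finset in
theorem card_filter_Ico_add (P : ℕ → Prop) [DecidablePred P] {m r : ℕ} (hm : m ≤ r) (T : ℕ) :
    #{n ∈ Ico m (T + r) | P n} = #{n ∈ Ico m r | P n} + #{n ∈ range T | P (n + r)} := by
  rw [← Ico_union_Ico_eq_Ico hm (Nat.le_add_left r T), filter_union,
    card_union_of_disjoint (disjoint_filter_filter (Ico_disjoint_Ico_consecutive _ _ _))]
  have hshift : Ico r (T + r) = (range T).map (addRightEmbedding r) := by
    rw [range_eq_Ico, map_add_right_Ico, zero_add]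
  rw [hshift, filter_map, card_map]
  rfl

open Finset in
theorem card_filter_Ico_natCast_eq {N : ℕ} (x y : ZMod N) {m r : ℕ} (hm : m ≤ r) (T : ℕ) :
    #((Ico m (T + r)).filter fun n : ℕ => (n : ZMod N) = r + x - y) =
      #((Ico m r).filter fun n : ℕ => (n : ZMod N) = r + x - y) +
        #((range T).filter fun n : ℕ => (n : ZMod N) = x - y) := by
  rw [card_filter_Ico_add _ hm]
  congr 2
  refine filter_congr fun n _ => ?_
  push_cast
  constructor <;> intro h <;> linear_combination h

theorem div_lt_of_lt_two_mul {p m n : ℕ} (hp : 2 ≤ p) (hm : m < 2 * n) : m / p < n :=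
  Nat.div_lt_of_lt_mul (by nlinarith)

end Counting

section SupportedTuples

open PowerSeries

variable {F ι : Type*} [Field F]

variable (F) in
def suppTuples (P : ι → ℕ → Prop) : Submodule F (ι → F⟦X⟧) where
  carrier := { μ | ∀ i n, coeff n (μ i) ≠ 0 → P i n }
  zero_mem' := by simp
  add_mem' {x y} hx hy i n hn := by
    by_contra hP
    have hx0 : coeff n (x i) = 0 := not_not.mp (mt (hx i n) hP)
    have hy0 : coeff n (y i) = 0 := not_not.mp (mt (hy i n) hP)
    simp [hx0, hy0] at hn
  smul_mem' t x hx i n hn := hx i n fun h0 => hn (by simp [h0])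

theorem suppTuples_mono {P Q : ι → ℕ → Prop} (h : ∀ i n, P i n → Q i n) :
    suppTuples F P ≤ suppTuples F Q := fun _ hx i n hn => h i n (hx i n hn)

theorem suppTuples_congr {P Q : ι → ℕ → Prop} (h : ∀ i n, P i n ↔ Q i n) :
    suppTuples F P = suppTuples F Q :=
  le_antisymm (suppTuples_mono fun i n => (h i n).mp) (suppTuples_mono fun i n => (h i n).mpr)

theorem suppTuples_inf (P Q : ι → ℕ → Prop) :
    suppTuples F P ⊓ suppTuples F Q = suppTuples F fun i n => P i n ∧ Q i n :=
  le_antisymm (fun _ hx i n hn => ⟨hx.1 i n hn, hx.2 i n hn⟩)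
    (le_inf (suppTuples_mono fun _ _ => And.left) (suppTuples_mono fun _ _ => And.right))

theorem goodTuples_eq_suppTuples {f : ℕ} (N : ℕ) (e : ZMod f → ZMod N) :
    goodTuples F f N e = suppTuples F fun i n => (n : ZMod N) = e i := rfl

theorem dvdTuples_eq_suppTuples {f : ℕ} (m : ZMod f → ℕ) :
    dvdTuples F f m = suppTuples F fun i n => m i ≤ n := by
  ext h
  refine forall_congr' fun i => ?_
  rw [X_pow_dvd_iff]
  exact ⟨fun hh n hn => not_lt.mp fun hlt => hn (hh n hlt),
    fun hh n hlt => not_not.mp fun hn => (hh n hn).not_gt hlt⟩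

variable (F) in
noncomputable def cutTuples (P : ι → ℕ → Prop) [∀ i n, Decidable (P i n)] :
    (ι → F⟦X⟧) →ₗ[F] (ι → F⟦X⟧) where
  toFun μ i := mk fun n => if P i n then coeff n (μ i) else 0
  map_add' x y := by
    funext i; ext n
    simp only [Pi.add_apply, map_add, coeff_mk]
    split <;> simp
  map_smul' t x := by
    funext i; ext n
    simp only [Pi.smul_apply, map_smul, coeff_mk, RingHom.id_apply, smul_eq_mul]
    split <;> simp

variable {P Q : ι → ℕ → Prop} [∀ i n, Decidable (P i n)]

@[simp]
theorem coeff_cutTuples (μ : ι → F⟦X⟧) (i : ι) (n : ℕ) :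
    coeff n (cutTuples F P μ i) = if P i n then coeff n (μ i) else 0 :=
  coeff_mk (R := F) n fun n => if P i n then coeff n (μ i) else 0

theorem cutTuples_cutTuples (μ : ι → F⟦X⟧) : cutTuples F P (cutTuples F P μ) = cutTuples F P μ := by
  funext i; ext n
  simp only [coeff_cutTuples]
  split <;> simp

theorem cutTuples_eq_zero_iff {μ : ι → F⟦X⟧} :
    cutTuples F P μ = 0 ↔ μ ∈ suppTuples F fun i n => ¬ P i n := by
  refine ⟨fun h i n hn hP => hn ?_, fun h => ?_⟩
  · simpa [hP] using congrArg (coeff n) (congrFun h i)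
  · funext i; ext n
    simp only [coeff_cutTuples, Pi.zero_apply, map_zero, ite_eq_right_iff]
    exact fun hP => not_not.mp fun hn => h i n hn hP

theorem map_cutTuples_suppTuples :
    map (cutTuples F P) (suppTuples F Q) = suppTuples F fun i n => Q i n ∧ P i n := by
  apply le_antisymm
  · rintro _ ⟨μ, hμ, rfl⟩ i n hn
    simp only [coeff_cutTuples, ne_eq, ite_eq_right_iff, not_forall] at hn
    exact ⟨hμ i n hn.2, hn.1⟩
  · intro μ hμ
    refine ⟨μ, suppTuples_mono (fun _ _ => And.left) hμ, ?_⟩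
    funext i; ext n
    simp only [coeff_cutTuples, ite_eq_left_iff]
    exact fun hP => not_not.mp fun hn => hP (hμ i n (Ne.symm hn)).2

theorem cutTuples_mem_suppTuples {μ : ι → F⟦X⟧} (hμ : μ ∈ suppTuples F Q) :
    cutTuples F P μ ∈ suppTuples F Q :=
  suppTuples_mono (fun _ _ => And.left)
    (map_cutTuples_suppTuples (F := F) (P := P) ▸ mem_map_of_mem hμ)

variable (F) in
noncomputable def suppTuplesFinsetEquiv (S : ι → Finset ℕ) :
    suppTuples F (fun i n => n ∈ S i) ≃ₗ[F] ((i : ι) → S i → F) where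
  toFun μ i n := coeff n (μ.1 i)
  map_add' _ _ := by funext i n; simp
  map_smul' _ _ := by funext i n; simp
  invFun g := ⟨fun i => mk fun n => if hn : n ∈ S i then g i ⟨n, hn⟩ else 0,
    fun i n hn => by by_contra h; simp [h] at hn⟩
  left_inv μ := by
    ext i n
    simp only [coeff_mk]
    split_ifs with h
    · rfl
    · exact (not_not.mp (mt (μ.2 i n) h)).symm
  right_inv g := by funext i n; simp

theorem finiteDimensional_suppTuples [Finite ι] (S : ι → Finset ℕ) :
    FiniteDimensional F (suppTuples F fun i n => n ∈ S i) :=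
  (suppTuplesFinsetEquiv F S).symm.finiteDimensional

theorem finrank_suppTuples [Fintype ι] (S : ι → Finset ℕ) :
    finrank F (suppTuples F fun i n => n ∈ S i) = ∑ i, (S i).card := by
  simp [(suppTuplesFinsetEquiv F S).finrank_eq, finrank_pi_fintype]

theorem cutTuples_lt_eq_zero_iff {t : ι → ℕ} {μ : ι → F⟦X⟧} :
    cutTuples F (fun i n => n < t i) μ = 0 ↔ μ ∈ suppTuples F fun i n => t i ≤ n := by
  rw [cutTuples_eq_zero_iff, suppTuples_congr fun _ _ => not_lt]

theorem map_cutTuples_goodTuples {f N : ℕ} (e : ZMod f → ZMod N) (T : ℕ) :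
    map (cutTuples F fun _ n => n < T) (goodTuples F f N e) =
      suppTuples F fun i n => n ∈ (Finset.range T).filter fun n : ℕ => (n : ZMod N) = e i := by
  rw [goodTuples_eq_suppTuples, map_cutTuples_suppTuples]
  exact suppTuples_congr fun _ _ => by simp [and_comm]

theorem map_cutTuples_goodTuples_inf_dvdTuples {f N : ℕ} (e : ZMod f → ZMod N)
    (m t : ZMod f → ℕ) :
    map (cutTuples F fun i n => n < t i) (goodTuples F f N e ⊓ dvdTuples F f m) =
      suppTuples F fun i n =>
        n ∈ (Finset.Ico (m i) (t i)).filter fun n : ℕ => (n : ZMod N) = e i := by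
  rw [goodTuples_eq_suppTuples, dvdTuples_eq_suppTuples, suppTuples_inf,
    map_cutTuples_suppTuples]
  exact suppTuples_congr fun _ _ => by simp only [Finset.mem_filter, Finset.mem_Ico]; tauto

end SupportedTuples

section DelMap

open PowerSeries

variable {F : Type*} [Field F] {f p : ℕ} {a b : ZMod f → F} {r s : ZMod f → ℕ}

theorem coeff_delMap (μ : ZMod f → F⟦X⟧) (i : ZMod f) (n : ℕ) :
    coeff n (delMap F p f a b r s μ i) =
      -(a i * if r i ≤ n then coeff (n - r i) (μ i) else 0) +
        b i * if s i ≤ n ∧ p ∣ n - s i then coeff ((n - s i) / p) (μ (i - 1)) else 0 := by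
  change coeff n (-(C (a i) * X ^ r i * μ i) + C (b i) * X ^ s i * expandPS F p (μ (i - 1))) = _
  rw [map_add, map_neg, mul_assoc, mul_assoc, coeff_C_mul, coeff_C_mul, coeff_X_pow_mul',
    coeff_X_pow_mul', coeff_expandPS, ite_and]

theorem coeff_add_delMap (μ : ZMod f → F⟦X⟧) (i : ZMod f) (n : ℕ) :
    coeff (r i + n) (delMap F p f a b r s μ i) =
      -(a i * coeff n (μ i)) +
        b i * if s i ≤ r i + n ∧ p ∣ r i + n - s i then
          coeff ((r i + n - s i) / p) (μ (i - 1)) else 0 := by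
  rw [coeff_delMap, if_pos (Nat.le_add_right _ _), Nat.add_sub_cancel_left]

theorem coeff_delMap_ne_zero {μ : ZMod f → F⟦X⟧} {i : ZMod f} {n : ℕ}
    (hn : coeff n (delMap F p f a b r s μ i) ≠ 0) :
    (r i ≤ n ∧ coeff (n - r i) (μ i) ≠ 0) ∨
      (s i ≤ n ∧ p ∣ n - s i ∧ coeff ((n - s i) / p) (μ (i - 1)) ≠ 0) := by
  rw [coeff_delMap] at hn
  by_contra! h
  apply hn
  rw [ite_eq_right_iff.mpr h.1, ite_eq_right_iff.mpr fun hs => h.2 hs.1 hs.2]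
  simp

theorem delMap_mem_suppTuples_min (μ : ZMod f → F⟦X⟧) :
    delMap F p f a b r s μ ∈ suppTuples F fun i n => min (r i) (s i) ≤ n := by
  intro i n hn
  rcases coeff_delMap_ne_zero hn with ⟨hrn, -⟩ | ⟨hsn, -⟩ <;> omega

theorem delMap_mem_suppTuples_add {T : ℕ} (hp : 2 ≤ p) (hrT : ∀ i, r i ≤ T)
    {μ : ZMod f → F⟦X⟧} (hμ : μ ∈ suppTuples F fun _ n => T ≤ n) :
    delMap F p f a b r s μ ∈ suppTuples F fun i n => T + r i ≤ n := by
  intro i n hn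
  rcases coeff_delMap_ne_zero hn with ⟨hrn, hne⟩ | ⟨hsn, hdvd, hne⟩
  · have := hμ i _ hne
    omega
  · have hk := hμ (i - 1) _ hne
    have hpk := Nat.mul_div_cancel' hdvd
    have h2k := Nat.mul_le_mul_right ((n - s i) / p) hp
    have := hrT i
    omega

theorem natCast_add_mul_eq {N : ℕ} {c d : ZMod f → ZMod N}
    (hc : ∀ i, (p : ZMod N) * c (i - 1) = c i + r i)
    (hd : ∀ i, (p : ZMod N) * d (i - 1) = d i + s i) {i : ZMod f} {k : ℕ}
    (hk : (k : ZMod N) = c (i - 1) - d (i - 1)) :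
    ((s i + p * k : ℕ) : ZMod N) = r i + c i - d i := by
  push_cast
  linear_combination p * hk + hc i - hd i

theorem delMap_mem_goodTuples {N : ℕ} {c d : ZMod f → ZMod N}
    (hc : ∀ i, (p : ZMod N) * c (i - 1) = c i + r i)
    (hd : ∀ i, (p : ZMod N) * d (i - 1) = d i + s i) {μ : ZMod f → F⟦X⟧}
    (hμ : μ ∈ goodTuples F f N fun i => c i - d i) :
    delMap F p f a b r s μ ∈ goodTuples F f N fun i => (r i : ZMod N) + c i - d i := by
  intro i n hn
  rcases coeff_delMap_ne_zero hn with ⟨hrn, hne⟩ | ⟨hsn, hdvd, hne⟩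
  · have h := hμ i _ hne
    rw [Nat.cast_sub hrn] at h
    linear_combination h
  · rw [← Nat.add_sub_cancel' hsn, ← Nat.mul_div_cancel' hdvd]
    exact natCast_add_mul_eq hc hd (hμ (i - 1) _ hne)

theorem eq_zero_of_delMap_eq_zero {T : ℕ} (hp : 2 ≤ p) (ha : ∀ i, a i ≠ 0)
    (hrT : ∀ i, r i < T) {μ : ZMod f → F⟦X⟧} (hμ : μ ∈ suppTuples F fun _ n => T ≤ n)
    (hD : delMap F p f a b r s μ = 0) : μ = 0 := by
  suffices h : ∀ n i, coeff n (μ i) = 0 by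
    funext i; ext n; simp [h]
  intro n
  induction n using Nat.strong_induction_on with
  | _ n ih =>
    intro i
    by_cases hTn : T ≤ n
    · have h0 := congrArg (coeff (r i + n)) (congrFun hD i)
      have hk : (r i + n - s i) / p < n := div_lt_of_lt_two_mul hp (by have := hrT i; omega)
      rw [coeff_add_delMap, ih _ hk, ite_self, mul_zero, add_zero, Pi.zero_apply, map_zero,
        neg_eq_zero] at h0
      exact (mul_eq_zero.mp h0).resolve_left (ha i)
    · exact not_not.mp fun hne => hTn (hμ i n hne)

-- The guard `(r i + n - s i) / p < n` only serves termination: it holds whenever `T ≤ n`.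
variable (F p a b r s) in
noncomputable def delMapSolutionCoeff (T : ℕ) (h : ZMod f → F⟦X⟧) : ℕ → ZMod f → F
  | n, i =>
    if T ≤ n then
      (a i)⁻¹ * (b i * (if s i ≤ r i + n ∧ p ∣ r i + n - s i then
          (if hk : (r i + n - s i) / p < n then
            delMapSolutionCoeff T h ((r i + n - s i) / p) (i - 1) else 0) else 0)
        - coeff (r i + n) (h i))
    else 0
termination_by n => n

variable (F p a b r s) in
noncomputable def delMapSolution (T : ℕ) (h : ZMod f → F⟦X⟧) : ZMod f → F⟦X⟧ :=
  fun i => mk fun n => delMapSolutionCoeff F p a b r s T h n i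

variable {T : ℕ} {h : ZMod f → F⟦X⟧}

theorem coeff_delMapSolution_of_lt {n : ℕ} (hn : n < T) (i : ZMod f) :
    coeff n (delMapSolution F p a b r s T h i) = 0 := by
  rw [delMapSolution, coeff_mk, delMapSolutionCoeff, if_neg (not_le.mpr hn)]

theorem coeff_delMapSolution_of_le (hp : 2 ≤ p) (hrT : ∀ i, r i < T) {n : ℕ} (hn : T ≤ n)
    (i : ZMod f) :
    coeff n (delMapSolution F p a b r s T h i) =
      (a i)⁻¹ * (b i * (if s i ≤ r i + n ∧ p ∣ r i + n - s i then
          coeff ((r i + n - s i) / p) (delMapSolution F p a b r s T h (i - 1)) else 0)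
        - coeff (r i + n) (h i)) := by
  have hk : (r i + n - s i) / p < n := div_lt_of_lt_two_mul hp (by have := hrT i; omega)
  simp only [delMapSolution, coeff_mk]
  rw [delMapSolutionCoeff, if_pos hn, dif_pos hk]

theorem delMapSolution_mem_suppTuples :
    delMapSolution F p a b r s T h ∈ suppTuples F fun _ n => T ≤ n :=
  fun i _ hn => not_lt.mp fun hlt => hn (coeff_delMapSolution_of_lt hlt i)

theorem delMap_delMapSolution (hp : 2 ≤ p) (ha : ∀ i, a i ≠ 0) (hrT : ∀ i, r i < T)
    (hh : h ∈ suppTuples F fun i n => T + r i ≤ n) :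
    delMap F p f a b r s (delMapSolution F p a b r s T h) = h := by
  funext i; ext m
  by_cases hm : T + r i ≤ m
  · obtain ⟨n, rfl⟩ : ∃ n, m = r i + n := ⟨m - r i, by omega⟩
    rw [coeff_add_delMap, coeff_delMapSolution_of_le hp hrT (by omega)]
    field_simp [ha i]
    ring
  · rw [not_not.mp (mt (hh i m) hm), coeff_delMap, ite_eq_right_iff.mpr, ite_eq_right_iff.mpr]
    · simp
    · rintro ⟨hsm, hdvd⟩
      have := Nat.mul_div_cancel' hdvd
      refine coeff_delMapSolution_of_lt (div_lt_of_lt_two_mul hp ?_) _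
      have := hrT i
      omega
    · exact fun _ => coeff_delMapSolution_of_lt (by omega) _

theorem delMapSolution_mem_goodTuples {N : ℕ} {c d : ZMod f → ZMod N} (hp : 2 ≤ p)
    (hrT : ∀ i, r i < T)
    (hc : ∀ i, (p : ZMod N) * c (i - 1) = c i + r i)
    (hd : ∀ i, (p : ZMod N) * d (i - 1) = d i + s i)
    (hh : h ∈ goodTuples F f N fun i => (r i : ZMod N) + c i - d i) :
    delMapSolution F p a b r s T h ∈ goodTuples F f N fun i => c i - d i := by
  intro i n
  induction n using Nat.strong_induction_on generalizing i with
  | _ n ih =>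
    intro hne
    by_contra hcon
    apply hne
    by_cases hn : T ≤ n
    · rw [coeff_delMapSolution_of_le hp hrT hn, ite_eq_right_iff.mpr, not_not.mp (mt (hh i _) ?_)]
      · simp
      · push_cast
        exact fun h' => hcon (by linear_combination h')
      · rintro ⟨hsn, hdvd⟩
        refine not_not.mp fun hk => hcon ?_
        have hkn : (r i + n - s i) / p < n := div_lt_of_lt_two_mul hp (by have := hrT i; omega)
        have := natCast_add_mul_eq hc hd (ih _ hkn (i - 1) hk)
        rw [Nat.mul_div_cancel' hdvd, Nat.add_sub_cancel' hsn] at this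
        push_cast at this
        linear_combination this
    · exact coeff_delMapSolution_of_lt (not_le.mp hn) i

theorem map_delMap_goodTuples_le {N e' : ℕ} {c d : ZMod f → ZMod N}
    (hc : ∀ i, (p : ZMod N) * c (i - 1) = c i + r i)
    (hd : ∀ i, (p : ZMod N) * d (i - 1) = d i + s i) (hr : ∀ i, r i ≤ e') (hs : ∀ i, s i ≤ e') :
    map (delMap F p f a b r s) (goodTuples F f N fun i => c i - d i) ≤
      (goodTuples F f N fun i => (r i : ZMod N) + c i - d i) ⊓
        dvdTuples F f fun i => r i + s i - e' := by
  rintro _ ⟨μ, hμ, rfl⟩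
  refine ⟨delMap_mem_goodTuples hc hd hμ, ?_⟩
  rw [dvdTuples_eq_suppTuples]
  refine suppTuples_mono (fun i n (h : min (r i) (s i) ≤ n) => ?_) (delMap_mem_suppTuples_min μ)
  have := hr i
  have := hs i
  omega

end DelMap

theorem ext_BT_dimension_formula_general
    (p f f' e' : ℕ) (hp : p.Prime) [NeZero f]
    (F : Type*) [Field F]
    (a b : ZMod f → Fˣ) (r s : ZMod f → ℕ)
    (c d : ZMod f → ZMod (p ^ f' - 1))
    (hc : ∀ i, (p : ZMod (p ^ f' - 1)) * c (i - 1) = c i + (r i : ZMod (p ^ f' - 1)))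
    (hd : ∀ i, (p : ZMod (p ^ f' - 1)) * d (i - 1) = d i + (s i : ZMod (p ^ f' - 1)))
    (hr : ∀ i, r i ≤ e') (hs : ∀ i, s i ≤ e') :
    let N := p ^ f' - 1
    let C0 := goodTuples F f N fun i => c i - d i
    let C1 := goodTuples F f N fun i => (r i : ZMod N) + c i - d i
    let D := delMap F p f (fun i => (a i : F)) (fun i => (b i : F)) r s
    let BT := dvdTuples F f fun i => r i + s i - e'
    let q := Submodule.comap C1.subtype (Submodule.map D C0)
    let img := Submodule.map q.mkQ (Submodule.comap C1.subtype BT)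
    FiniteDimensional F ↥img ∧
    Module.finrank F ↥img =
      Module.finrank F ↥(C0 ⊓ LinearMap.ker D) +
      ∑ i : ZMod f, ((Finset.Ico (r i + s i - e') (r i)).filter
        (fun j : ℕ => ((j : ZMod N) = (r i : ZMod N) + c i - d i))).card := by
  intro N C0 C1 D BT q img
  have hp2 := hp.two_le
  have ha : ∀ i, (a i : F) ≠ 0 := fun i => (a i).ne_zero
  have hrT : ∀ i, r i < e' + 1 := fun i => Nat.lt_succ_of_le (hr i)
  have hBT : BT = suppTuples F fun i n => r i + s i - e' ≤ n := dvdTuples_eq_suppTuples _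
  have hP := map_cutTuples_goodTuples (F := F) (fun i => c i - d i) (e' + 1)
  have hQ := map_cutTuples_goodTuples_inf_dvdTuples (F := F)
    (fun i => (r i : ZMod N) + c i - d i) (fun i => r i + s i - e') (fun i => e' + 1 + r i)
  have : FiniteDimensional F (map (cutTuples F fun _ n => n < e' + 1) C0) :=
    hP ▸ finiteDimensional_suppTuples _
  have : FiniteDimensional F (map (cutTuples F fun i n => n < e' + 1 + r i) (C1 ⊓ BT)) :=
    hQ ▸ finiteDimensional_suppTuples _
  obtain ⟨hfin, hrank⟩ := finrank_map_mkQ_add_finrank_map (D := D) (C0 := C0) (C := C1) (B := BT)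
    cutTuples_cutTuples cutTuples_cutTuples (fun _ => cutTuples_mem_suppTuples)
    (fun _ => cutTuples_mem_suppTuples) (hBT ▸ fun _ => cutTuples_mem_suppTuples)
    (map_delMap_goodTuples_le hc hd hr hs)
    (fun x hx => cutTuples_lt_eq_zero_iff.mpr <| delMap_mem_suppTuples_add hp2
      (fun i => (hrT i).le) (cutTuples_lt_eq_zero_iff.mp hx))
    (fun x _ hPx hDx => eq_zero_of_delMap_eq_zero hp2 ha hrT (cutTuples_lt_eq_zero_iff.mp hPx) hDx)
    (fun y hy hQy => ⟨_, delMapSolution_mem_goodTuples hp2 hrT hc hd hy,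
      cutTuples_lt_eq_zero_iff.mpr delMapSolution_mem_suppTuples,
      delMap_delMapSolution hp2 ha hrT (cutTuples_lt_eq_zero_iff.mp hQy)⟩)
  refine ⟨hfin, ?_⟩
  rw [hP, hQ, finrank_suppTuples, finrank_suppTuples] at hrank
  rw [Finset.sum_congr rfl fun i _ => card_filter_Ico_natCast_eq (c i) (d i)
    (Nat.sub_le_of_le_add (Nat.add_le_add_left (hs i) _)) _, Finset.sum_add_distrib] at hrank
  simp only [img, q]
  omega

/-- With `C¹_BT ⊆ C¹` the subspace of tuples `h` with `u^{max(0, r_i + s_i - e')} ∣ h_i` for all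
`i` (representing the extension classes of height at most one), the image of `C¹_BT` in
`coker ∂` is a finite-dimensional `F`-vector space of dimension
`dim ker ∂ + Σ_i #{ j ∈ [max(0, r_i + s_i - e'), r_i) : j ≡ r_i + c_i - d_i (mod N) }`. -/
theorem ext_BT_dimension_formula
    (p f f' e' : ℕ) (hp : p.Prime) [NeZero f] (hf' : 0 < f') (hff' : f ∣ f')
    (F : Type*) [Field F] [Fintype F] [CharP F p]
    (a b : ZMod f → Fˣ) (r s : ZMod f → ℕ)
    (c d : ZMod f → ZMod (p ^ f' - 1))
    (hc : ∀ i, (p : ZMod (p ^ f' - 1)) * c (i - 1) = c i + (r i : ZMod (p ^ f' - 1)))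
    (hd : ∀ i, (p : ZMod (p ^ f' - 1)) * d (i - 1) = d i + (s i : ZMod (p ^ f' - 1)))
    (hr : ∀ i, r i ≤ e') (hs : ∀ i, s i ≤ e') :
    let N := p ^ f' - 1
    let C0 := goodTuples F f N fun i => c i - d i
    let C1 := goodTuples F f N fun i => (r i : ZMod N) + c i - d i
    let D := delMap F p f (fun i => (a i : F)) (fun i => (b i : F)) r s
    let BT := dvdTuples F f fun i => r i + s i - e'
    let q := Submodule.comap C1.subtype (Submodule.map D C0)
    let img := Submodule.map q.mkQ (Submodule.comap C1.subtype BT)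
    FiniteDimensional F ↥img ∧
    Module.finrank F ↥img =
      Module.finrank F ↥(C0 ⊓ LinearMap.ker D) +
      ∑ i : ZMod f, ((Finset.Ico (r i + s i - e') (r i)).filter
        (fun j : ℕ => ((j : ZMod N) = (r i : ZMod N) + c i - d i))).card :=
  ext_BT_dimension_formula_general p f f' e' hp F a b r s c d hc hd hr hs
end

section
/- Let h ≥ 1 and e' ≥ 0 be integers such that s_i ≤ e'h for all i (in the paper this holds when the rank one module M(s,b,d) has height at most h). Then every element (μ_i) of H is annihilated by u^{⌊e'h/(p−1)⌋}; equivalently, each μ_i has a representative Laurent series all of whose nonzero terms have degree at least −⌊e'h/(p−1)⌋. -/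
noncomputable section

/-- The submodule `F[[u]]` of the field of Laurent series `F((u))`, consisting of series with no
terms of negative degree. -/
def intPart (F : Type*) [Field F] : Submodule F (LaurentSeries F) where
  carrier := { x | ∀ n : ℤ, n < 0 → x.coeff n = 0 }
  zero_mem' := by intro n _; simp
  add_mem' := by
    intro x y hx hy n hn
    simp [HahnSeries.coeff_add, hx n hn, hy n hn]
  smul_mem' := by
    intro t x hx n hn
    simp [HahnSeries.coeff_smul, hx n hn]

/-- Substitution of `u^p` for `u` on Laurent series. -/
def substLaurent (F : Type*) [Field F] (p : ℕ) (hp : 0 < p) (x : LaurentSeries F) :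
    LaurentSeries F :=
  HahnSeries.embDomain
    (OrderEmbedding.ofStrictMono (fun n : ℤ => (p : ℤ) * n)
      (fun _ _ h => mul_lt_mul_of_pos_left h (by exact_mod_cast hp))) x

theorem substLaurent_zero (F : Type*) [Field F] (p : ℕ) (hp : 0 < p) :
    substLaurent F p hp 0 = 0 :=
  HahnSeries.embDomain_zero

theorem substLaurent_add (F : Type*) [Field F] (p : ℕ) (hp : 0 < p) (x y : LaurentSeries F) :
    substLaurent F p hp (x + y) = substLaurent F p hp x + substLaurent F p hp y :=
  HahnSeries.embDomain_add _ _ _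

theorem substLaurent_smul (F : Type*) [Field F] (p : ℕ) (hp : 0 < p) (t : F)
    (x : LaurentSeries F) :
    substLaurent F p hp (t • x) = t • substLaurent F p hp x :=
  HahnSeries.embDomain_smul _ _ _

/-- The space `H` of tuples `(μ_i)` of elements of `F((u))/F[[u]]` such that each `μ_i` is
represented by a Laurent series all of whose nonzero terms have degree congruent to
`c_i - d_i mod N`, and such that `a_i u^{r_i} μ_i = b_i u^{s_i} μ_{i-1}(u^p)` in
`F((u))/F[[u]]` for every `i`.  It computes `Hom(M(r,a,c), M(s,b,d)[1/u]/M(s,b,d))` for rank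
one Breuil–Kisin modules with tame descent data. -/
def Hspace (F : Type*) [Field F] (p : ℕ) (hp : 0 < p) (f N : ℕ)
    (a b : ZMod f → F) (r s : ZMod f → ℕ) (c d : ZMod f → ZMod N) :
    Submodule F (ZMod f → (LaurentSeries F ⧸ intPart F)) where
  carrier := { μ | ∃ x : ZMod f → LaurentSeries F,
      (∀ i, (Submodule.Quotient.mk (x i) : LaurentSeries F ⧸ intPart F) = μ i) ∧
      (∀ i (n : ℤ), (x i).coeff n ≠ 0 → (n : ZMod N) = c i - d i) ∧
      (∀ i, a i • ((HahnSeries.single (1 : ℤ) (1 : F)) ^ r i * x i)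
          - b i • ((HahnSeries.single (1 : ℤ) (1 : F)) ^ s i * substLaurent F p hp (x (i - 1)))
          ∈ intPart F) }
  zero_mem' := by
    refine ⟨0, fun i => by simp, fun i n h => absurd (by simp) h, fun i => by
      simp [substLaurent_zero]⟩
  add_mem' := by
    rintro μ ν ⟨x, hx1, hx2, hx3⟩ ⟨y, hy1, hy2, hy3⟩
    refine ⟨x + y, fun i => ?_, fun i n h => ?_, fun i => ?_⟩
    · simp [Submodule.Quotient.mk_add, hx1 i, hy1 i]
    · by_cases h1 : (x i).coeff n = 0
      · refine hy2 i n fun h2 => h ?_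
        simp [HahnSeries.coeff_add, h1, h2]
      · exact hx2 i n h1
    · have heq : a i • ((HahnSeries.single (1 : ℤ) (1 : F)) ^ r i * (x + y) i)
          - b i • ((HahnSeries.single (1 : ℤ) (1 : F)) ^ s i *
              substLaurent F p hp ((x + y) (i - 1)))
          = (a i • ((HahnSeries.single (1 : ℤ) (1 : F)) ^ r i * x i)
              - b i • ((HahnSeries.single (1 : ℤ) (1 : F)) ^ s i *
                  substLaurent F p hp (x (i - 1))))
            + (a i • ((HahnSeries.single (1 : ℤ) (1 : F)) ^ r i * y i)
              - b i • ((HahnSeries.single (1 : ℤ) (1 : F)) ^ s i *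
                  substLaurent F p hp (y (i - 1)))) := by
        simp only [Pi.add_apply, substLaurent_add, mul_add, smul_add]
        abel
      rw [heq]
      exact add_mem (hx3 i) (hy3 i)
  smul_mem' := by
    rintro t μ ⟨x, hx1, hx2, hx3⟩
    refine ⟨t • x, fun i => ?_, fun i n h => ?_, fun i => ?_⟩
    · simp [Submodule.Quotient.mk_smul, hx1 i]
    · refine hx2 i n fun h0 => h ?_
      simp [HahnSeries.coeff_smul, h0]
    · have heq : a i • ((HahnSeries.single (1 : ℤ) (1 : F)) ^ r i * (t • x) i)
          - b i • ((HahnSeries.single (1 : ℤ) (1 : F)) ^ s i *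
              substLaurent F p hp ((t • x) (i - 1)))
          = t • (a i • ((HahnSeries.single (1 : ℤ) (1 : F)) ^ r i * x i)
              - b i • ((HahnSeries.single (1 : ℤ) (1 : F)) ^ s i *
                  substLaurent F p hp (x (i - 1)))) := by
        simp only [Pi.smul_apply, substLaurent_smul]
        simp only [← HahnSeries.single_zero_mul_eq_smul]
        ring
      rw [heq]
      exact Submodule.smul_mem _ _ (hx3 i)

end

/-!
Take any representative `(x_i)` of `μ` and let `x_j` have the least order `M` among the `x_i`.
If `M < 0`, compare the coefficients of `u^{pM + s_i}` in the relation for `i = j + 1`: when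
`pM + s_i < 0`, the term `b_i u^{s_i} x_j(u^p)` contributes `b_i` times the leading
coefficient of `x_j`, so `x_i` must have a nonzero coefficient in degree `pM + s_i - r_i ≥ M`.
Either way `(p - 1)(-M) ≤ s_i ≤ e'h`.
-/

section

open HahnSeries

variable {F : Type*} [Field F]

theorem coeff_single_one_pow_mul (r : ℕ) (y : LaurentSeries F) (n : ℤ) :
    (single (1 : ℤ) (1 : F) ^ r * y).coeff n = y.coeff (n - r) := by
  simp [single_pow, coeff_single_mul]

theorem substLaurent_coeff_natCast_mul (p : ℕ) (hp : 0 < p) (y : LaurentSeries F) (m : ℤ) :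
    (substLaurent F p hp y).coeff (p * m) = y.coeff m :=
  embDomain_coeff

theorem order_le_of_smul_sub_smul_substLaurent_mem_intPart {p : ℕ} (hp : 0 < p) {α β : F}
    (hβ : β ≠ 0) {r s : ℕ} {y y' : LaurentSeries F} (hy' : y' ≠ 0)
    (hrel : α • (single (1 : ℤ) (1 : F) ^ r * y)
      - β • (single (1 : ℤ) (1 : F) ^ s * substLaurent F p hp y') ∈ intPart F)
    (hneg : p * y'.order + s < 0) :
    y.order ≤ p * y'.order + s - r := by
  have hcoeff := hrel _ hneg
  simp only [coeff_sub, coeff_smul, smul_eq_mul, coeff_single_one_pow_mul, add_sub_cancel_right,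
    substLaurent_coeff_natCast_mul, sub_eq_zero] at hcoeff
  refine order_le_of_coeff_ne_zero fun hzero => ?_
  rw [hzero, mul_zero] at hcoeff
  exact mul_ne_zero hβ (coeff_order_eq_zero.not.mpr hy') hcoeff.symm

theorem neg_div_le_order_of_smul_sub_smul_substLaurent_mem_intPart {ι : Type*} [Finite ι]
    [Nonempty ι] {σ : ι → ι} (hσ : Function.Surjective σ) {p : ℕ} (hp : 1 < p) (a b : ι → F)
    (hb : ∀ i, b i ≠ 0) (r s : ι → ℕ) {x : ι → LaurentSeries F}
    (hrel : ∀ i, a i • (single (1 : ℤ) (1 : F) ^ r i * x i)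
      - b i • (single (1 : ℤ) (1 : F) ^ s i * substLaurent F p (by omega) (x (σ i))) ∈ intPart F)
    {S : ℕ} (hS : ∀ i, s i ≤ S) (k : ι) :
    -((S / (p - 1) : ℕ) : ℤ) ≤ (x k).order := by
  obtain ⟨j, hj⟩ := Finite.exists_min fun i => (x i).order
  obtain ⟨i, rfl⟩ := hσ j
  refine le_trans ?_ (hj k)
  set M := (x (σ i)).order
  have hp' : (1 : ℤ) < p := by exact_mod_cast hp
  have hsi : (s i : ℤ) ≤ S := by exact_mod_cast hS i
  have key : ((p : ℤ) - 1) * -M ≤ S := by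
    rcases le_or_gt 0 M with hM | hM
    · nlinarith
    by_cases hneg : (p : ℤ) * M + s i < 0
    · have hxσ : x (σ i) ≠ 0 := fun h0 => by simp [M, h0] at hM
      have hi := order_le_of_smul_sub_smul_substLaurent_mem_intPart _ (hb i) hxσ (hrel i) hneg
      have hr : (0 : ℤ) ≤ r i := Int.natCast_nonneg _
      linarith [hj i]
    · linarith
  rw [Int.natCast_div, Nat.cast_sub hp.le, Nat.cast_one, neg_le,
    Int.le_ediv_iff_mul_le (by omega)]
  linarith

end

theorem hom_to_quotient_torsion_bound_general
    (p f f' h e' : ℕ) (hp : p.Prime) [NeZero f]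
    (F : Type*) [Field F]
    (a b : ZMod f → Fˣ) (r s : ZMod f → ℕ)
    (c d : ZMod f → ZMod (p ^ f' - 1))
    (hs : ∀ i, s i ≤ e' * h) :
    ∀ μ ∈ Hspace F p hp.pos f (p ^ f' - 1) (fun i => (a i : F)) (fun i => (b i : F)) r s c d,
      ∃ x : ZMod f → LaurentSeries F,
        (∀ i, (Submodule.Quotient.mk (x i) : LaurentSeries F ⧸ intPart F) = μ i) ∧
        ∀ i (n : ℤ), (x i).coeff n ≠ 0 → -((e' * h / (p - 1) : ℕ) : ℤ) ≤ n := by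
  rintro μ ⟨x, hxμ, -, hrel⟩
  have hpred : Function.Surjective fun i : ZMod f => i - 1 :=
    fun j => ⟨j + 1, add_sub_cancel_right j 1⟩
  refine ⟨x, hxμ, fun i n hn => ?_⟩
  calc -((e' * h / (p - 1) : ℕ) : ℤ)
      ≤ (x i).order := neg_div_le_order_of_smul_sub_smul_substLaurent_mem_intPart hpred
        hp.one_lt _ _ (fun i => (b i).ne_zero) r s hrel hs i
    _ ≤ n := HahnSeries.order_le_of_coeff_ne_zero hn

/-- If `s_i ≤ e'h` for all `i` (as holds when the rank one Breuil–Kisin module `M(s,b,d)` has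
height at most `h`), then every element `(μ_i)` of `H = Hom(M(r,a,c), M(s,b,d)[1/u]/M(s,b,d))`
is annihilated by `u^{⌊e'h/(p-1)⌋}`; equivalently, each `μ_i` has a representative Laurent
series all of whose nonzero terms have degree at least `-⌊e'h/(p-1)⌋`. -/
theorem hom_to_quotient_torsion_bound
    (p f f' h e' : ℕ) (hp : p.Prime) [NeZero f] (hf' : 0 < f') (hff' : f ∣ f') (hh : 1 ≤ h)
    (F : Type*) [Field F] [Fintype F] [CharP F p]
    (a b : ZMod f → Fˣ) (r s : ZMod f → ℕ)
    (c d : ZMod f → ZMod (p ^ f' - 1))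
    (hc : ∀ i, (p : ZMod (p ^ f' - 1)) * c (i - 1) = c i + (r i : ZMod (p ^ f' - 1)))
    (hd : ∀ i, (p : ZMod (p ^ f' - 1)) * d (i - 1) = d i + (s i : ZMod (p ^ f' - 1)))
    (hs : ∀ i, s i ≤ e' * h) :
    ∀ μ ∈ Hspace F p hp.pos f (p ^ f' - 1) (fun i => (a i : F)) (fun i => (b i : F)) r s c d,
      ∃ x : ZMod f → LaurentSeries F,
        (∀ i, (Submodule.Quotient.mk (x i) : LaurentSeries F ⧸ intPart F) = μ i) ∧
        ∀ i (n : ℤ), (x i).coeff n ≠ 0 → -((e' * h / (p - 1) : ℕ) : ℤ) ≤ n :=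
  hom_to_quotient_torsion_bound_general p f f' h e' hp F a b r s c d hs
end
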